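/- arXiv:2201.01879 — 2 statements merged into one kernel-verified Lean document; each statement's English description precedes it below -/
import Mathlib

section
/- For π = 1/2, the asymptotic relative bias b(β₁ᵍ, 1/2, c, β₀ᵍ) = 1 − γ(β₁ᵍ, 1/2, c, β₀ᵍ) of the thresholding estimator satisfies 0 < b < 2 for all (β₁ᵍ, c, β₀ᵍ) ∈ ℝ³; in particular the attenuation factor γ satisfies −1 < γ < 1, so the estimator strictly underestimates |β₁ᵐ| in absolute value. -/
open MeasureTheory ProbabilityTheory Filter

/-- Standard normal CDF. -/
noncomputable def Phi (x : ℝ) : ℝ := ((gaussianReal 0 1) (Set.Iic x)).toReal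

/-- Attenuation function `γ(β₁ᵍ, π, c, β₀ᵍ) = π(ω − E)/(E(1 − E))` with
`E = ζ(1−π) + ωπ`, `ω = Φ(β₁ᵍ + β₀ᵍ − c)`, `ζ = Φ(β₀ᵍ − c)`. -/
noncomputable def gammaFn (b1 p c b0 : ℝ) : ℝ :=
  p * (Phi (b1 + b0 - c) - (Phi (b0 - c) * (1 - p) + Phi (b1 + b0 - c) * p)) /
    ((Phi (b0 - c) * (1 - p) + Phi (b1 + b0 - c) * p) *
      (1 - (Phi (b0 - c) * (1 - p) + Phi (b1 + b0 - c) * p)))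

lemma Phi_pos (x : ℝ) : 0 < Phi x := by
  rw [Phi, ENNReal.toReal_pos_iff]
  constructor
  · rw [pos_iff_ne_zero]
    intro h
    have h2 := (gaussianReal_absolutelyContinuous' 0 (v := 1) one_ne_zero) h
    rw [Real.volume_Iic] at h2
    simp at h2
  · exact measure_lt_top _ _

lemma Phi_lt_one (x : ℝ) : Phi x < 1 := by
  have hpos : (0 : ENNReal) < gaussianReal 0 1 (Set.Ioi x) := by
    rw [pos_iff_ne_zero]
    intro h
    have h2 := (gaussianReal_absolutelyContinuous' 0 (v := 1) one_ne_zero) h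
    rw [Real.volume_Ioi] at h2
    simp at h2
  have hU : gaussianReal 0 1 (Set.Iic x) + gaussianReal 0 1 (Set.Ioi x) = 1 := by
    rw [← measure_union (Set.Iic_disjoint_Ioi le_rfl) measurableSet_Ioi,
      Set.Iic_union_Ioi, measure_univ]
  have hne : gaussianReal 0 1 (Set.Iic x) ≠ ⊤ := measure_ne_top _ _
  have : gaussianReal 0 1 (Set.Iic x) < 1 := by
    rw [← hU]
    exact ENNReal.lt_add_right hne hpos.ne'
  rw [Phi]
  calc (gaussianReal 0 1 (Set.Iic x)).toReal < (1 : ENNReal).toReal := by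
        exact ENNReal.toReal_strict_mono (by simp) this
    _ = 1 := by simp

/-- For π = 1/2 the asymptotic relative bias b = 1 − γ satisfies 0 < b < 2
(equivalently −1 < γ < 1) for all (β₁ᵍ, c, β₀ᵍ) ∈ ℝ³. -/
theorem stmt_1 (b1 c b0 : ℝ) :
    (0 < 1 - gammaFn b1 (1/2) c b0 ∧ 1 - gammaFn b1 (1/2) c b0 < 2) ∧
      (-1 < gammaFn b1 (1/2) c b0 ∧ gammaFn b1 (1/2) c b0 < 1) := by
  set w := Phi (b1 + b0 - c) with hw
  set z := Phi (b0 - c) with hz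
  have hw0 : 0 < w := Phi_pos _
  have hw1 : w < 1 := Phi_lt_one _
  have hz0 : 0 < z := Phi_pos _
  have hz1 : z < 1 := Phi_lt_one _
  have hE : gammaFn b1 (1/2) c b0 =
      ((w - z)/4) / ((z + w)/2 * (1 - (z + w)/2)) := by
    rw [gammaFn, ← hw, ← hz]; ring_nf
  have hd0 : 0 < (z + w)/2 * (1 - (z + w)/2) := by
    apply mul_pos (by linarith)
    linarith
  have key : |(w - z)/4| < (z + w)/2 * (1 - (z + w)/2) := by
    rw [abs_lt]
    constructor <;>
      nlinarith [mul_pos hz0 (by linarith : (0:ℝ) < 1 - w),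
        mul_pos hw0 (by linarith : (0:ℝ) < 1 - z),
        mul_pos hz0 (by linarith : (0:ℝ) < 1 - z),
        mul_pos hw0 (by linarith : (0:ℝ) < 1 - w)]
  have h1 : |gammaFn b1 (1/2) c b0| < 1 := by
    rw [hE, abs_div, abs_of_pos hd0, div_lt_one hd0]
    exact key
  rw [abs_lt] at h1
  refine ⟨⟨by linarith [h1.2], by linarith [h1.1]⟩, h1⟩
end

section
/- For π = 1/2, the attenuation function evaluated at the Bayes-optimal decision boundary c_bayes = β₀ᵍ + β₁ᵍ/2 simplifies to r(β₁ᵍ) = 2Φ(β₁ᵍ/2) − 1, i.e., γ(β₁ᵍ, 1/2, β₀ᵍ + β₁ᵍ/2, β₀ᵍ) = 2Φ(β₁ᵍ/2) − 1 for all β₁ᵍ ≥ 0 and β₀ᵍ ∈ ℝ. -/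
open MeasureTheory ProbabilityTheory Filter

lemma Phi_neg (x : ℝ) : Phi (-x) = 1 - Phi x := by
  have hmap : (gaussianReal (0:ℝ) 1).map (fun y => (-1 : ℝ) * y) = gaussianReal 0 1 := by
    simpa using gaussianReal_map_const_mul (μ := 0) (v := 1) (-1)
  have h1 : (gaussianReal (0:ℝ) 1) (Set.Iic (-x)) = (gaussianReal (0:ℝ) 1) (Set.Ici x) := by
    conv_lhs => rw [← hmap]
    rw [Measure.map_apply (by fun_prop) measurableSet_Iic]
    congr 1
    ext y
    simp [neg_le]
  have h2 : (gaussianReal (0:ℝ) 1) (Set.Ici x) = 1 - (gaussianReal (0:ℝ) 1) (Set.Iic x) := by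
    have := prob_compl_eq_one_sub (μ := gaussianReal (0:ℝ) 1) (measurableSet_Iio (a := x))
    have hIio : (gaussianReal (0:ℝ) 1) (Set.Iio x) = (gaussianReal (0:ℝ) 1) (Set.Iic x) := by
      refine measure_congr ?_
      have : (gaussianReal (0:ℝ) 1) {x} = 0 :=
        (gaussianReal_absolutelyContinuous 0 (by norm_num)) (measure_singleton x)
      rw [Filter.eventuallyEq_set]
      filter_upwards [measure_eq_zero_iff_ae_notMem.mp this] with y hy
      simp only [Set.mem_Iio, Set.mem_Iic]
      constructor
      · exact le_of_lt
      · intro h; rcases lt_or_eq_of_le h with h | h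
        · exact h
        · exact absurd h (by simpa using hy)
    rw [← hIio]
    rw [eq_comm]; simpa [Set.compl_Iio] using this.symm
  have hle : (gaussianReal (0:ℝ) 1) (Set.Iic x) ≤ 1 := prob_le_one
  unfold Phi
  rw [h1, h2, ENNReal.toReal_sub_of_le hle (by norm_num)]
  norm_num

/-- For π = 1/2, the attenuation function evaluated at the Bayes-optimal decision
boundary c_bayes = β₀ᵍ + β₁ᵍ/2 simplifies to r(β₁ᵍ) = 2Φ(β₁ᵍ/2) − 1. -/
theorem stmt_6 (b1 b0 : ℝ) (hb1 : 0 ≤ b1) :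
    gammaFn b1 (1/2) (b0 + b1/2) b0 = 2 * Phi (b1/2) - 1 := by
  unfold gammaFn
  have h1 : b1 + b0 - (b0 + b1/2) = b1/2 := by ring
  have h2 : b0 - (b0 + b1/2) = -(b1/2) := by ring
  rw [h1, h2, Phi_neg]
  ring
end
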